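/- Let 0 < V₀ < 2 and σ₀ > 0. On a probability space, let (ΔW⁰(k+1))_{k≥0} and (ΔW(k+1))_{k≥0} be two i.i.d. sequences of standard normal random variables, let α(0) be square-integrable with E[α(0)] = 0 and E[α(0)²] = σ₀²/(2V₀−V₀²), and assume that the family {α(0), ΔW⁰(k+1) : k ≥ 0} is independent of the family {ΔW(k+1) : k ≥ 0}. Define α(k+1) = (1−V₀)·α(k) + σ₀·ΔW⁰(k+1). Then the empirical cross term (1/T)·Σ_{k=0}^{T−1} α(k)·ΔW(k+1) converges to 0 almost surely as T → ∞. -/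

import Mathlib

open MeasureTheory ProbabilityTheory Filter Finset Topology
open scoped NNReal

/-!
The products `X k = α k * W k` are orthogonal in `L²`: `α k` is measurable for the first
σ-algebra and `W k` for the second, so `E[X j X k] = E[α j α k] * E[W j W k]`, which vanishes for
`j ≠ k` because the `W k` are independent and centred. Since `|1 - V₀| < 1`, the recursion keeps
`‖α k‖_{L²}` bounded, hence also `E[X k ^ 2] = E[α k ^ 2]`. Rajchman's argument then gives the
strong law for such orthogonal sequences: with `S T = ∑_{k<T} X k`, the quantity
`(S (n²) ^ 2 + ∑_{n² ≤ T < (n+1)²} (S T - S (n²)) ^ 2) / n⁴` has expectation `O(1/n²)`, so it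
tends to `0` almost surely, and it bounds `(S T / T) ^ 2` on the whole block `n² ≤ T < (n+1)²`.
-/

noncomputable def squareBlockDeviation (s : ℕ → ℝ) (n : ℕ) : ℝ :=
  (s (n ^ 2) ^ 2 + ∑ T ∈ Ico (n ^ 2) ((n + 1) ^ 2), (s T - s (n ^ 2)) ^ 2) / (n : ℝ) ^ 4

lemma abs_div_le_two_sqrt_squareBlockDeviation (s : ℕ → ℝ) {T : ℕ} (hT : 1 ≤ T) :
    |s T / T| ≤ 2 * √(squareBlockDeviation s (Nat.sqrt T)) := by
  set n := Nat.sqrt T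
  have hn : (0 : ℝ) < n := by exact_mod_cast Nat.sqrt_pos.2 hT
  have hnT : n ^ 2 ≤ T := Nat.sqrt_le' T
  have hTn : T < (n + 1) ^ 2 := Nat.lt_succ_sqrt' T
  have hhead : |s (n ^ 2) / n ^ 2| ≤ √(squareBlockDeviation s n) := by
    refine Real.abs_le_sqrt ?_
    rw [squareBlockDeviation, div_pow, ← pow_mul]
    gcongr
    exact le_add_of_nonneg_right (sum_nonneg fun _ _ => sq_nonneg _)
  have htail : |(s T - s (n ^ 2)) / n ^ 2| ≤ √(squareBlockDeviation s n) := by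
    refine Real.abs_le_sqrt ?_
    rw [squareBlockDeviation, div_pow, ← pow_mul]
    gcongr
    exact (single_le_sum (f := fun T => (s T - s (n ^ 2)) ^ 2) (fun _ _ => sq_nonneg _)
      (mem_Ico.2 ⟨hnT, hTn⟩)).trans (le_add_of_nonneg_left (sq_nonneg _))
  calc |s T / T| ≤ |s T / n ^ 2| := by
        rw [abs_div, abs_div, abs_of_pos (Nat.cast_pos.2 hT : (0 : ℝ) < T),
          abs_of_pos (pow_pos hn 2)]
        exact div_le_div_of_nonneg_left (abs_nonneg _) (by positivity) (by exact_mod_cast hnT)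
    _ = |s (n ^ 2) / n ^ 2 + (s T - s (n ^ 2)) / n ^ 2| := by ring_nf
    _ ≤ 2 * √(squareBlockDeviation s n) := (abs_add_le _ _).trans (by linarith)

theorem tendsto_div_zero_of_tendsto_squareBlockDeviation {s : ℕ → ℝ}
    (h : Tendsto (squareBlockDeviation s) atTop (𝓝 0)) :
    Tendsto (fun T : ℕ => s T / T) atTop (𝓝 0) := by
  have hsqrt : Tendsto Nat.sqrt atTop atTop :=
    tendsto_atTop_atTop.2 fun b => ⟨b ^ 2, fun _ hT => Nat.le_sqrt'.2 hT⟩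
  have hbound : Tendsto (fun T => 2 * √(squareBlockDeviation s (Nat.sqrt T))) atTop (𝓝 0) := by
    simpa using ((h.sqrt).comp hsqrt).const_mul 2
  exact squeeze_zero_norm' (eventually_atTop.2 ⟨1, fun T hT =>
    abs_div_le_two_sqrt_squareBlockDeviation s hT⟩) hbound

section Orthogonal

variable {Ω : Type*} [MeasurableSpace Ω] {μ : Measure Ω}

theorem ae_tendsto_zero_of_summable_integral_norm {E : Type*} [NormedAddCommGroup E]
    {u : ℕ → Ω → E} (hu : ∀ n, Integrable (u n) μ)
    (hsum : Summable fun n => ∫ ω, ‖u n ω‖ ∂μ) :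
    ∀ᵐ ω ∂μ, Tendsto (fun n => u n ω) atTop (𝓝 0) := by
  have hL1 : ∑' n, eLpNorm (u n) 1 μ ≠ ⊤ := by
    simp_rw [eLpNorm_one_eq_lintegral_enorm, ← ofReal_integral_norm_eq_lintegral_enorm (hu _)]
    rw [← ENNReal.ofReal_tsum_of_nonneg (fun n => integral_nonneg fun _ => norm_nonneg _) hsum]
    exact ENNReal.ofReal_ne_top
  filter_upwards [summable_norm_of_tsum_eLpNorm_ne_top le_rfl (fun n => (hu n).1) hL1] with ω hω
  exact tendsto_zero_iff_norm_tendsto_zero.2 hω.tendsto_atTop_zero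

variable {X : ℕ → Ω → ℝ}

theorem integral_sq_sum_eq_of_orthogonal (hX : ∀ k, MemLp (X k) 2 μ)
    (horth : Pairwise fun j k => ∫ ω, X j ω * X k ω ∂μ = 0) (s : Finset ℕ) :
    ∫ ω, (∑ k ∈ s, X k ω) ^ 2 ∂μ = ∑ k ∈ s, ∫ ω, X k ω ^ 2 ∂μ := by
  have hint (j k : ℕ) : Integrable (fun ω => X j ω * X k ω) μ := (hX j).integrable_mul (hX k)
  simp_rw [sq, sum_mul_sum]
  rw [integral_finsetSum _ fun j _ => integrable_finsetSum _ fun k _ => hint j k]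
  refine sum_congr rfl fun j hj => ?_
  rw [integral_finsetSum _ fun k _ => hint j k]
  exact sum_eq_single j (fun k _ hkj => horth hkj.symm) (absurd hj)

theorem integral_sq_sum_range_sub_le_of_orthogonal {K : ℝ} (hX : ∀ k, MemLp (X k) 2 μ)
    (horth : Pairwise fun j k => ∫ ω, X j ω * X k ω ∂μ = 0)
    (hK : ∀ k, ∫ ω, X k ω ^ 2 ∂μ ≤ K) {m T : ℕ} (hmT : m ≤ T) :
    ∫ ω, (∑ k ∈ range T, X k ω - ∑ k ∈ range m, X k ω) ^ 2 ∂μ ≤ K * (T - m : ℕ) := by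
  simp_rw [← sum_Ico_eq_sub _ hmT]
  rw [integral_sq_sum_eq_of_orthogonal hX horth, ← Nat.card_Ico, mul_comm, ← nsmul_eq_mul]
  exact sum_le_card_nsmul _ _ _ fun k _ => hK k

theorem integral_squareBlockDeviation_le_of_orthogonal {K : ℝ} (hX : ∀ k, MemLp (X k) 2 μ)
    (horth : Pairwise fun j k => ∫ ω, X j ω * X k ω ∂μ = 0)
    (hK : ∀ k, ∫ ω, X k ω ^ 2 ∂μ ≤ K) (n : ℕ) :
    ∫ ω, squareBlockDeviation (fun T => ∑ k ∈ range T, X k ω) n ∂μ ≤ 10 * K * ((n : ℝ) ^ 2)⁻¹ := by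
  rcases n.eq_zero_or_pos with rfl | hn
  · simp [squareBlockDeviation]
  have hK0 : 0 ≤ K := (integral_nonneg fun ω => sq_nonneg (X 0 ω)).trans (hK 0)
  have hS (T : ℕ) : MemLp (fun ω => ∑ k ∈ range T, X k ω) 2 μ := memLp_finsetSum _ fun k _ => hX k
  have hhead : ∫ ω, (∑ k ∈ range (n ^ 2), X k ω) ^ 2 ∂μ ≤ K * (n : ℝ) ^ 2 := by
    have h := integral_sq_sum_range_sub_le_of_orthogonal hX horth hK (Nat.zero_le (n ^ 2))
    simpa only [range_zero, sum_empty, sub_zero, Nat.sub_zero, Nat.cast_pow] using h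
  have hblock : (((n + 1) ^ 2 - n ^ 2 : ℕ) : ℝ) = 2 * n + 1 := by
    rw [Nat.sub_eq_of_eq_add (by ring : (n + 1) ^ 2 = 2 * n + 1 + n ^ 2)]; push_cast; ring
  have htail : ∀ T ∈ Ico (n ^ 2) ((n + 1) ^ 2),
      ∫ ω, (∑ k ∈ range T, X k ω - ∑ k ∈ range (n ^ 2), X k ω) ^ 2 ∂μ ≤ K * (2 * n + 1) := by
    intro T hT
    obtain ⟨hnT, hTn⟩ := mem_Ico.1 hT
    refine (integral_sq_sum_range_sub_le_of_orthogonal hX horth hK hnT).trans ?_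
    rw [← hblock]
    gcongr
  have hn' : (1 : ℝ) ≤ n := by exact_mod_cast hn
  have hint (m T : ℕ) :
      Integrable (fun ω => (∑ k ∈ range T, X k ω - ∑ k ∈ range m, X k ω) ^ 2) μ :=
    ((hS T).sub (hS m)).integrable_sq
  calc ∫ ω, squareBlockDeviation (fun T => ∑ k ∈ range T, X k ω) n ∂μ
      = (∫ ω, (∑ k ∈ range (n ^ 2), X k ω) ^ 2 ∂μ + ∑ T ∈ Ico (n ^ 2) ((n + 1) ^ 2),
          ∫ ω, (∑ k ∈ range T, X k ω - ∑ k ∈ range (n ^ 2), X k ω) ^ 2 ∂μ) / (n : ℝ) ^ 4 := by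
        simp only [squareBlockDeviation]
        rw [integral_div, integral_add (hS _).integrable_sq
            (integrable_finsetSum _ fun T _ => hint _ T), integral_finsetSum _ fun T _ => hint _ T]
    _ ≤ (K * (n : ℝ) ^ 2 + ∑ T ∈ Ico (n ^ 2) ((n + 1) ^ 2), K * (2 * n + 1)) / (n : ℝ) ^ 4 := by
        gcongr with T hT
        exact htail T hT
    _ = K * ((n : ℝ) ^ 2 + (2 * n + 1) ^ 2) / (n : ℝ) ^ 4 := by
        rw [sum_const, Nat.card_Ico, nsmul_eq_mul, hblock]; ring
    _ ≤ 10 * K * ((n : ℝ) ^ 2)⁻¹ := by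
        rw [div_le_iff₀ (by positivity)]
        calc K * ((n : ℝ) ^ 2 + (2 * n + 1) ^ 2) ≤ K * (10 * (n : ℝ) ^ 2) := by gcongr; nlinarith
          _ = 10 * K * ((n : ℝ) ^ 2)⁻¹ * (n : ℝ) ^ 4 := by field_simp

theorem ae_tendsto_sum_range_div_of_orthogonal {K : ℝ} (hX : ∀ k, MemLp (X k) 2 μ)
    (horth : Pairwise fun j k => ∫ ω, X j ω * X k ω ∂μ = 0)
    (hK : ∀ k, ∫ ω, X k ω ^ 2 ∂μ ≤ K) :
    ∀ᵐ ω ∂μ, Tendsto (fun T : ℕ => (∑ k ∈ range T, X k ω) / T) atTop (𝓝 0) := by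
  set u : ℕ → Ω → ℝ := fun n ω => squareBlockDeviation (fun T => ∑ k ∈ range T, X k ω) n
  have hu_nonneg (n : ℕ) (ω : Ω) : 0 ≤ u n ω := by
    unfold u squareBlockDeviation
    positivity
  have hS (T : ℕ) : MemLp (fun ω => ∑ k ∈ range T, X k ω) 2 μ := memLp_finsetSum _ fun k _ => hX k
  have hu_int (n : ℕ) : Integrable (u n) μ :=
    ((hS _).integrable_sq.add (integrable_finsetSum _ fun T _ =>
      ((hS T).sub (hS _)).integrable_sq)).div_const _
  have hsum : Summable fun n => ∫ ω, ‖u n ω‖ ∂μ := by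
    simp_rw [Real.norm_of_nonneg (hu_nonneg _ _)]
    exact ((Real.summable_nat_pow_inv.2 one_lt_two).mul_left (10 * K)).of_nonneg_of_le
      (fun n => integral_nonneg (hu_nonneg n))
      (integral_squareBlockDeviation_le_of_orthogonal hX horth hK)
  filter_upwards [ae_tendsto_zero_of_summable_integral_norm hu_int hsum] with ω hω
  exact tendsto_div_zero_of_tendsto_squareBlockDeviation hω

end Orthogonal

section Gaussian

variable {Ω : Type*} [MeasurableSpace Ω] {μ : Measure Ω} {ξ : Ω → ℝ} {m : ℝ} {v : ℝ≥0}

lemma hasLaw_of_map_eq {𝓧 : Type*} [MeasurableSpace 𝓧] {X : Ω → 𝓧} {ν : Measure 𝓧} [NeZero ν]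
    (h : μ.map X = ν) : HasLaw X ν μ :=
  ⟨aemeasurable_of_map_neZero (h ▸ inferInstance), h⟩

lemma memLp_of_hasLaw_gaussianReal (hξ : HasLaw ξ (gaussianReal m v) μ) (p : ℝ≥0) :
    MemLp ξ p μ := by
  have h : MemLp id p (μ.map ξ) := hξ.map_eq ▸ memLp_id_gaussianReal p
  exact (memLp_map_measure_iff (hξ.map_eq ▸ aestronglyMeasurable_id) hξ.aemeasurable).1 h

lemma integral_of_hasLaw_gaussianReal (hξ : HasLaw ξ (gaussianReal m v) μ) : ∫ ω, ξ ω ∂μ = m := by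
  rw [hξ.integral_eq, integral_id_gaussianReal]

lemma integral_sq_of_hasLaw_gaussianReal (hξ : HasLaw ξ (gaussianReal 0 v) μ) :
    ∫ ω, ξ ω ^ 2 ∂μ = v := by
  rw [← variance_of_integral_eq_zero hξ.aemeasurable (integral_of_hasLaw_gaussianReal hξ),
    hξ.variance_eq, variance_id_gaussianReal]

end Gaussian

section IndependentProduct

variable {Ω : Type*} {m₁ m₂ : MeasurableSpace Ω} [MeasurableSpace Ω] {μ : Measure Ω}

lemma indepFun_of_indep {β γ : Type*} [MeasurableSpace β] [MeasurableSpace γ]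
    {f : Ω → β} {g : Ω → γ} (h : Indep m₁ m₂ μ) (hf : Measurable[m₁] f) (hg : Measurable[m₂] g) :
    IndepFun f g μ :=
  (IndepFun_iff_Indep f g μ).2
    (indep_of_indep_of_le_right (indep_of_indep_of_le_left h hf.comap_le) hg.comap_le)

variable {a w : ℕ → Ω → ℝ}

lemma integral_mul_mul_of_indep (h : Indep m₁ m₂ μ) (ha : ∀ k, Measurable[m₁] (a k))
    (hw : ∀ k, Measurable[m₂] (w k)) (haL : ∀ k, MemLp (a k) 2 μ) (hwL : ∀ k, MemLp (w k) 2 μ)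
    (j k : ℕ) :
    ∫ ω, a j ω * w j ω * (a k ω * w k ω) ∂μ
      = (∫ ω, a j ω * a k ω ∂μ) * ∫ ω, w j ω * w k ω ∂μ := by
  have hind := indepFun_of_indep h (Measurable.mul (m := m₁) (ha j) (ha k))
    (Measurable.mul (m := m₂) (hw j) (hw k))
  calc ∫ ω, a j ω * w j ω * (a k ω * w k ω) ∂μ = ∫ ω, (a j * a k * (w j * w k)) ω ∂μ := by
        congr 1 with ω
        simp only [Pi.mul_apply]
        ring
    _ = _ := hind.integral_mul_eq_mul_integral ((haL j).1.mul (haL k).1) ((hwL j).1.mul (hwL k).1)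

lemma memLp_mul_of_indep (h : Indep m₁ m₂ μ) (ha : ∀ k, Measurable[m₁] (a k))
    (hw : ∀ k, Measurable[m₂] (w k)) (haL : ∀ k, MemLp (a k) 2 μ) (hwL : ∀ k, MemLp (w k) 2 μ)
    (k : ℕ) : MemLp (fun ω => a k ω * w k ω) 2 μ := by
  have hind := indepFun_of_indep h (Measurable.pow_const (m := m₁) (ha k) 2)
    (Measurable.pow_const (m := m₂) (hw k) 2)
  refine (memLp_two_iff_integrable_sq ((haL k).1.mul (hwL k).1)).2 ?_
  simpa only [Pi.mul_def, mul_pow] using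
    hind.integrable_mul (haL k).integrable_sq (hwL k).integrable_sq

lemma integral_sq_mul_of_indep (h : Indep m₁ m₂ μ) (ha : ∀ k, Measurable[m₁] (a k))
    (hw : ∀ k, Measurable[m₂] (w k)) (haL : ∀ k, MemLp (a k) 2 μ) (hwL : ∀ k, MemLp (w k) 2 μ)
    (k : ℕ) :
    ∫ ω, (a k ω * w k ω) ^ 2 ∂μ = (∫ ω, a k ω ^ 2 ∂μ) * ∫ ω, w k ω ^ 2 ∂μ := by
  simpa only [sq] using integral_mul_mul_of_indep h ha hw haL hwL k k

lemma integral_mul_eq_zero_of_iIndepFun (hind : iIndepFun w μ)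
    (hw : ∀ k, AEStronglyMeasurable (w k) μ) (hmean : ∀ k, ∫ ω, w k ω ∂μ = 0) :
    Pairwise fun j k => ∫ ω, w j ω * w k ω ∂μ = 0 := fun j k hjk => by
  have h := (hind.indepFun hjk).integral_mul_eq_mul_integral (hw j) (hw k)
  rwa [hmean j, zero_mul] at h

end IndependentProduct

section AffineRecursion

theorem norm_le_max_of_eq_smul_add {𝕜 E : Type*} [NormedField 𝕜] [SeminormedAddCommGroup E]
    [NormedSpace 𝕜 E] {x y : ℕ → E} {a : 𝕜} {C : ℝ} (ha : ‖a‖ < 1) (hy : ∀ k, ‖y k‖ ≤ C)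
    (hx : ∀ k, x (k + 1) = a • x k + y k) (k : ℕ) :
    ‖x k‖ ≤ max ‖x 0‖ (C / (1 - ‖a‖)) := by
  set M := max ‖x 0‖ (C / (1 - ‖a‖))
  have hC : C ≤ (1 - ‖a‖) * M := by
    rw [← div_le_iff₀' (by linarith)]
    exact le_max_right _ _
  induction k with
  | zero => exact le_max_left _ _
  | succ k ih =>
    calc ‖x (k + 1)‖ ≤ ‖a‖ * ‖x k‖ + C := by
          rw [hx k]
          exact (norm_add_le _ _).trans (by rw [norm_smul]; linarith [hy k])
      _ ≤ ‖a‖ * M + (1 - ‖a‖) * M := by gcongr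
      _ = M := by ring

lemma measurable_of_eq_mul_add {Ω : Type*} {m : MeasurableSpace Ω} {x ξ : ℕ → Ω → ℝ} {a b : ℝ}
    (hx : Measurable[m] (x 0)) (hξ : ∀ k, Measurable[m] (ξ k))
    (hrec : ∀ k, x (k + 1) = fun ω => a * x k ω + b * ξ k ω)
    (k : ℕ) : Measurable[m] (x k) := by
  induction k with
  | zero => exact hx
  | succ k ih => rw [hrec k]; exact (ih.const_mul a).add ((hξ k).const_mul b)

variable {Ω : Type*} [MeasurableSpace Ω] {μ : Measure Ω} {x ξ : ℕ → Ω → ℝ} {a b : ℝ}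

lemma memLp_of_eq_mul_add (hx : MemLp (x 0) 2 μ) (hξ : ∀ k, MemLp (ξ k) 2 μ)
    (hrec : ∀ k, x (k + 1) = fun ω => a * x k ω + b * ξ k ω) (k : ℕ) : MemLp (x k) 2 μ := by
  induction k with
  | zero => exact hx
  | succ k ih => rw [hrec k]; exact (ih.const_mul a).add ((hξ k).const_mul b)

lemma integral_sq_eq_norm_toLp_sq {f : Ω → ℝ} (hf : MemLp f 2 μ) :
    ∫ ω, f ω ^ 2 ∂μ = ‖hf.toLp f‖ ^ 2 := by
  rw [← real_inner_self_eq_norm_sq, L2.inner_def]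
  refine integral_congr_ae ?_
  filter_upwards [hf.coeFn_toLp] with ω hω
  simp [hω, sq]

theorem exists_integral_sq_le_of_eq_mul_add {C : ℝ} (ha : |a| < 1)
    (hx : ∀ k, MemLp (x k) 2 μ) (hξ : ∀ k, MemLp (ξ k) 2 μ) (hξC : ∀ k, ∫ ω, ξ k ω ^ 2 ∂μ ≤ C)
    (hrec : ∀ k, x (k + 1) = fun ω => a * x k ω + b * ξ k ω) :
    ∃ M, ∀ k, ∫ ω, x k ω ^ 2 ∂μ ≤ M := by
  have hy (k : ℕ) : ‖b • (hξ k).toLp‖ ≤ |b| * √C := by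
    rw [norm_smul, Real.norm_eq_abs]
    gcongr
    have h := hξC k
    rw [integral_sq_eq_norm_toLp_sq (hξ k)] at h
    exact Real.le_sqrt_of_sq_le h
  have hrecLp (k : ℕ) : (hx (k + 1)).toLp = a • (hx k).toLp + b • (hξ k).toLp := by
    rw [← MemLp.toLp_const_smul, ← MemLp.toLp_const_smul, ← MemLp.toLp_add,
      MemLp.toLp_eq_toLp_iff]
    refine Eventually.of_forall fun ω => ?_
    simp only [hrec k, Pi.add_apply, Pi.smul_apply, smul_eq_mul]
  have hbound := norm_le_max_of_eq_smul_add (x := fun k => (hx k).toLp)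
    (by rwa [Real.norm_eq_abs]) hy hrecLp
  refine ⟨(max ‖(hx 0).toLp‖ (|b| * √C / (1 - ‖a‖))) ^ 2, fun k => ?_⟩
  rw [integral_sq_eq_norm_toLp_sq (hx k)]
  exact pow_le_pow_left₀ (norm_nonneg _) (hbound k) 2

end AffineRecursion

theorem empirical_cross_term_vanishes_general
    {Ω : Type*} [MeasureSpace Ω] (μ : Measure Ω) [IsProbabilityMeasure μ]
    (V₀ σ₀ : ℝ) (hV₀ : 0 < V₀ ∧ V₀ < 2)
    (α : ℕ → Ω → ℝ) (W0 W : ℕ → Ω → ℝ)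
    (hα0 : MemLp (α 0) 2 μ)
    (hW0dist : ∀ k, Measure.map (W0 k) μ = gaussianReal 0 1)
    (hWiid : iIndepFun W μ)
    (hWdist : ∀ k, Measure.map (W k) μ = gaussianReal 0 1)
    (hIndep : Indep
      (MeasurableSpace.comap (α 0) inferInstance
        ⊔ ⨆ k, MeasurableSpace.comap (W0 k) inferInstance)
      (⨆ k, MeasurableSpace.comap (W k) inferInstance) μ)
    (hrec : ∀ k, α (k + 1) = fun ω => (1 - V₀) * α k ω + σ₀ * W0 k ω) :
    ∀ᵐ ω ∂μ, Tendsto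
      (fun T : ℕ => (1 / (T : ℝ)) * ∑ k ∈ Finset.range T, α k ω * W k ω)
      atTop (nhds 0) := by
  have hW0law (k : ℕ) := hasLaw_of_map_eq (hW0dist k)
  have hWlaw (k : ℕ) := hasLaw_of_map_eq (hWdist k)
  have hW0L (k : ℕ) : MemLp (W0 k) 2 μ := memLp_of_hasLaw_gaussianReal (hW0law k) 2
  have hWL (k : ℕ) : MemLp (W k) 2 μ := memLp_of_hasLaw_gaussianReal (hWlaw k) 2
  have hαL := memLp_of_eq_mul_add hα0 hW0L hrec
  have hαA := measurable_of_eq_mul_add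
    (m := MeasurableSpace.comap (α 0) inferInstance
      ⊔ ⨆ k, MeasurableSpace.comap (W0 k) inferInstance)
    (Measurable.of_comap_le le_sup_left)
    (fun k => Measurable.of_comap_le
      ((le_iSup (fun j => MeasurableSpace.comap (W0 j) inferInstance) k).trans le_sup_right)) hrec
  have hWB (k : ℕ) :=
    Measurable.of_comap_le (le_iSup (fun j => MeasurableSpace.comap (W j) inferInstance) k)
  have hWorth := integral_mul_eq_zero_of_iIndepFun hWiid (fun k => (hWL k).1)
    (fun k => integral_of_hasLaw_gaussianReal (hWlaw k))
  obtain ⟨M, hM⟩ := exists_integral_sq_le_of_eq_mul_add (abs_lt.2 ⟨by linarith, by linarith⟩)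
    hαL hW0L (fun k => (integral_sq_of_hasLaw_gaussianReal (hW0law k)).le) hrec
  have hXorth : Pairwise fun j k => ∫ ω, α j ω * W j ω * (α k ω * W k ω) ∂μ = 0 :=
    fun j k hjk => (integral_mul_mul_of_indep hIndep hαA hWB hαL hWL j k).trans
      (by rw [hWorth hjk, mul_zero])
  have hXsq (k : ℕ) : ∫ ω, (α k ω * W k ω) ^ 2 ∂μ ≤ M := by
    rw [integral_sq_mul_of_indep hIndep hαA hWB hαL hWL,
      integral_sq_of_hasLaw_gaussianReal (hWlaw k)]
    simpa using hM k
  filter_upwards [ae_tendsto_sum_range_div_of_orthogonal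
    (memLp_mul_of_indep hIndep hαA hWB hαL hWL) hXorth hXsq] with ω hω
  simpa only [one_div_mul_eq_div] using hω

/-- **Strong consistency: vanishing of the empirical cross term.**
Let `α` be the stationary discrete Markov diffusion
`α (k+1) = (1-V₀) α k + σ₀ W0 k` driven by an i.i.d. standard normal sequence `W0`,
started from a mean-zero square-integrable initial value with the stationary variance
`σ₀^2/(2V₀ - V₀^2)`, and let `W` be an i.i.d. standard normal sequence such that the
family `{α 0, W0 k : k}` is independent of the family `{W k : k}`. Then the empirical
cross term `(1/T) Σ_{k<T} α k · W k` converges to `0` almost surely as `T → ∞`. -/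
theorem empirical_cross_term_vanishes
    {Ω : Type*} [MeasureSpace Ω] (μ : Measure Ω) [IsProbabilityMeasure μ]
    (V₀ σ₀ : ℝ) (hV₀ : 0 < V₀ ∧ V₀ < 2) (hσ₀ : 0 < σ₀)
    (α : ℕ → Ω → ℝ) (W0 W : ℕ → Ω → ℝ)
    (hα0 : MemLp (α 0) 2 μ)
    (hmean0 : ∫ ω, α 0 ω ∂μ = 0)
    (hvar0 : ∫ ω, (α 0 ω) ^ 2 ∂μ = σ₀ ^ 2 / (2 * V₀ - V₀ ^ 2))
    (hW0iid : iIndepFun W0 μ)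
    (hW0dist : ∀ k, Measure.map (W0 k) μ = gaussianReal 0 1)
    (hWiid : iIndepFun W μ)
    (hWdist : ∀ k, Measure.map (W k) μ = gaussianReal 0 1)
    (hIndep : Indep
      (MeasurableSpace.comap (α 0) inferInstance
        ⊔ ⨆ k, MeasurableSpace.comap (W0 k) inferInstance)
      (⨆ k, MeasurableSpace.comap (W k) inferInstance) μ)
    (hrec : ∀ k, α (k + 1) = fun ω => (1 - V₀) * α k ω + σ₀ * W0 k ω) :
    ∀ᵐ ω ∂μ, Tendsto
      (fun T : ℕ => (1 / (T : ℝ)) * ∑ k ∈ Finset.range T, α k ω * W k ω)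
      atTop (nhds 0) :=
  empirical_cross_term_vanishes_general μ V₀ σ₀ hV₀ α W0 W hα0 hW0dist hWiid hWdist hIndep hrec
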